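/- Let G = (V, E) be a graph with x ∈ ℝ^E_{>0}, and construct the capacitated graph G' on vertex set V ∪ {r, s}: each edge e of G gets capacity x(e)/2; each vertex v is joined to s by an edge of capacity 1 and to r by an edge of capacity x(δ(v))/2, where δ(v) is the set of edges incident to v. Then for any A ⊆ V with B = V∖A, the value of the cut in G' determined by A ∪ {r} equals x(E) − x(E_A) + |A|, where E_A is the set of edges with both endpoints in A. Consequently min{|A| − 1 − x(E_A) : ∅ ≠ A ⊆ V} equals (min over ∅ ≠ A ⊆ V of the cut value of A ∪ {r}) − x(E) − 1. -/

import Mathlib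

/-!
Count the cut edge by edge. An edge `e` of `G` with `k ∈ {0, 1, 2}` endpoints outside `A`
contributes `x(e)/2` itself when `k = 1` and `k · x(e)/2` through the edges `v–r`, so `x(e)`
in total unless `k = 0`, i.e. `e ∈ E_A`. The edges `v–s` add `|A|`. Hence
`cut(A ∪ {r}) = x(E) − x(E_A) + |A|`, and the two minima differ by the constant `x(E) + 1`.
-/

open Finset
open scoped Classical

/-- The set of edges with both endpoints in `A`. -/
noncomputable def edgesIn {V E : Type*} [Fintype E] (ends : E → Sym2 V)
    (A : Finset V) : Finset E :=
  Finset.univ.filter (fun e => ∀ v ∈ ends e, v ∈ A)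

/-- The set `δ(v)` of edges incident to the vertex `v`. -/
noncomputable def delta {V E : Type*} [Fintype E] (ends : E → Sym2 V)
    (v : V) : Finset E :=
  Finset.univ.filter (fun e => v ∈ ends e)

/-- The value of the cut of the auxiliary capacitated graph `G'` determined by
`A ∪ {r}`: edges of `G` between `A` and `V∖A` have capacity `x(e)/2`, the edge
`v–r` (for `v ∈ V∖A`) has capacity `x(δ(v))/2`, and the edge `v–s`
(for `v ∈ A`) has capacity `1`. -/
noncomputable def cutValue {V E : Type*} [Fintype V] [Fintype E] [DecidableEq V]
    (ends : E → Sym2 V) (x : E → ℝ) (A : Finset V) : ℝ :=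
  (∑ e ∈ Finset.univ.filter
      (fun e => (∃ v ∈ ends e, v ∈ A) ∧ (∃ v ∈ ends e, v ∉ A)), x e / 2)
    + (∑ v ∈ Aᶜ, (∑ e ∈ delta ends v, x e) / 2)
    + (A.card : ℝ)

theorem Finset.ite_crossing_add_card_sdiff_of_card_eq_two {V : Type*} [DecidableEq V]
    {t : Finset V} (ht : #t = 2) (A : Finset V) :
    (if (∃ v ∈ t, v ∈ A) ∧ (∃ v ∈ t, v ∉ A) then (1 : ℝ) else 0) + #(t \ A)
      = 2 * (1 - if t ⊆ A then 1 else 0) := by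
  obtain ⟨a, b, hab, rfl⟩ := card_eq_two.mp ht
  by_cases ha : a ∈ A <;> by_cases hb : b ∈ A <;>
    simp [ha, hb, hab, insert_subset_iff, sdiff_eq_filter, filter_insert, filter_singleton] <;>
    norm_num

section

variable {V E : Type*} [Fintype E] (ends : E → Sym2 V)

theorem sum_sum_delta {M : Type*} [AddCommMonoid M] [DecidableEq V] (x : E → M) (S : Finset V) :
    ∑ v ∈ S, ∑ e ∈ delta ends v, x e = ∑ e, #((ends e).toFinset ∩ S) • x e := by
  rw [sum_comm' (t' := univ) (s' := fun e => (ends e).toFinset ∩ S) (by simp [delta, and_comm])]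
  simp only [sum_const]

theorem cutValue_eq [Fintype V] [DecidableEq V] (hloops : ∀ e, ¬ (ends e).IsDiag)
    (x : E → ℝ) (A : Finset V) :
    cutValue ends x A = ∑ e, x e - ∑ e ∈ edgesIn ends A, x e + #A := by
  have hedge (e : E) :
      (if (∃ v ∈ ends e, v ∈ A) ∧ (∃ v ∈ ends e, v ∉ A) then x e / 2 else 0)
        + #((ends e).toFinset \ A) * x e / 2
        = x e - if ∀ v ∈ ends e, v ∈ A then x e else 0 := by
    have h := ite_crossing_add_card_sdiff_of_card_eq_two
      (Sym2.card_toFinset_of_not_isDiag _ (hloops e)) A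
    simp only [Sym2.mem_toFinset, subset_iff] at h
    split_ifs at h ⊢ <;> linear_combination (x e / 2) * h
  have hdelta : ∑ v ∈ Aᶜ, (∑ e ∈ delta ends v, x e) / 2
      = ∑ e, #((ends e).toFinset \ A) * x e / 2 := by
    simp only [← sum_div, sum_sum_delta, nsmul_eq_mul, sdiff_eq_inter_compl]
  rw [cutValue, edgesIn, hdelta, sum_filter, sum_filter, ← sum_add_distrib, ← sum_sub_distrib]
  simp only [hedge]
  -- the two sides differ only in the decidability instance of `∀ v ∈ ends e, v ∈ A`
  congr!

end

theorem csInf_image_add_const {α : Type*} [ConditionallyCompleteLattice α] [AddGroup α]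
    [AddRightMono α] {S : Set α} (hne : S.Nonempty) (hbdd : BddBelow S) (c : α) :
    sInf ((· + c) '' S) = sInf S + c :=
  ((OrderIso.addRight c).map_csInf' hne hbdd).symm

theorem stmt19_general {V E : Type*} [Fintype V] [Fintype E] [DecidableEq V]
    [Nonempty V]
    (ends : E → Sym2 V)
    (hloops : ∀ e, ¬ (ends e).IsDiag)
    (x : E → ℝ) :
    (∀ A : Finset V,
      cutValue ends x A =
        (∑ e : E, x e) - (∑ e ∈ edgesIn ends A, x e) + (A.card : ℝ)) ∧
    sInf {q : ℝ | ∃ A : Finset V, A.Nonempty ∧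
        q = (A.card : ℝ) - 1 - ∑ e ∈ edgesIn ends A, x e}
      = sInf {q : ℝ | ∃ A : Finset V, A.Nonempty ∧ q = cutValue ends x A}
        - (∑ e : E, x e) - 1 := by
  refine ⟨cutValue_eq ends hloops x, ?_⟩
  set cuts := {q : ℝ | ∃ A : Finset V, A.Nonempty ∧ q = cutValue ends x A}
  have hshift : {q : ℝ | ∃ A : Finset V, A.Nonempty ∧
      q = (A.card : ℝ) - 1 - ∑ e ∈ edgesIn ends A, x e}
      = (· + (-(∑ e, x e) - 1)) '' cuts := by
    ext q
    simp only [cuts, Set.mem_ofPred_eq, Set.mem_image, cutValue_eq ends hloops]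
    constructor
    · rintro ⟨A, hA, rfl⟩
      exact ⟨_, ⟨A, hA, rfl⟩, by ring⟩
    · rintro ⟨_, ⟨A, hA, rfl⟩, rfl⟩
      exact ⟨A, hA, by ring⟩
  have hne : cuts.Nonempty :=
    let ⟨v⟩ := ‹Nonempty V›
    ⟨_, {v}, singleton_nonempty v, rfl⟩
  have hbdd : BddBelow cuts :=
    ((Set.finite_range (cutValue ends x)).subset
      (by rintro _ ⟨A, -, rfl⟩; exact ⟨A, rfl⟩)).bddBelow
  rw [hshift, csInf_image_add_const hne hbdd]
  ring

/-- In Cunningham's minimum-cut formulation, for every `A ⊆ V` the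
value of the cut of `G'` determined by `A ∪ {r}` equals `x(E) − x(E_A) + |A|`;
consequently `min{|A| − 1 − x(E_A) : ∅ ≠ A ⊆ V}` equals the minimum cut value
over `∅ ≠ A ⊆ V` minus `x(E) + 1`. -/
theorem stmt19 {V E : Type*} [Fintype V] [Fintype E] [DecidableEq V]
    [Nonempty V]
    (ends : E → Sym2 V)
    (hloops : ∀ e, ¬ (ends e).IsDiag)
    (x : E → ℝ) (hx : ∀ e, 0 < x e) :
    (∀ A : Finset V,
      cutValue ends x A =
        (∑ e : E, x e) - (∑ e ∈ edgesIn ends A, x e) + (A.card : ℝ)) ∧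
    sInf {q : ℝ | ∃ A : Finset V, A.Nonempty ∧
        q = (A.card : ℝ) - 1 - ∑ e ∈ edgesIn ends A, x e}
      = sInf {q : ℝ | ∃ A : Finset V, A.Nonempty ∧ q = cutValue ends x A}
        - (∑ e : E, x e) - 1 :=
  stmt19_general ends hloops x
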